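/- arXiv:1005.1440 — 2 statements merged into one kernel-verified Lean document; each statement's English description precedes it below -/
import Mathlib

section
/- Let 0 < ε < 1 and set a = √(2/π)(1+ε). The equation s = a - φ(s)/Φ(s) has a unique solution s* in (0, ∞), and s* is the unique minimizer on (0, ∞) of the function A(s) = 2 e^{-a s + s²/2} Φ(s). -/
open MeasureTheory ProbabilityTheory

/-- The standard normal cumulative distribution function. -/
noncomputable def stdNormalCDF (s : ℝ) : ℝ := (gaussianReal 0 1 (Set.Iic s)).toReal

/-- The standard normal density. -/
noncomputable def stdNormalPDF (s : ℝ) : ℝ := gaussianPDFReal 0 1 s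

/-! With `m(s) = s + φ(s)/Φ(s)` one has `A' = A · (m - a)`, and the equation `s = a - φ(s)/Φ(s)`
reads `m(s) = a`. On `[0, ∞)` the function `m` is strictly increasing: `m' = (Φ² - φ² - sφΦ)/Φ²`,
and the numerator equals `1/4 - 1/(2π) > 0` at `0` and has derivative `φ((1 + s²)Φ + sφ) ≥ 0`.
Since `m(0) = √(2/π) < a < m(a)`, there is exactly one `s* > 0` with `m(s*) = a`, and `A'` changes
sign from negative to positive there. -/

open Set Real

lemma stdNormalPDF_eq (s : ℝ) : stdNormalPDF s = (√(2 * π))⁻¹ * exp (-(s ^ 2) / 2) := by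
  simp [stdNormalPDF, gaussianPDFReal]

lemma stdNormalPDF_pos (s : ℝ) : 0 < stdNormalPDF s :=
  gaussianPDFReal_pos _ _ _ one_ne_zero

lemma stdNormalPDF_zero : stdNormalPDF 0 = (√(2 * π))⁻¹ := by
  simp [stdNormalPDF_eq]

lemma hasDerivAt_stdNormalPDF (s : ℝ) : HasDerivAt stdNormalPDF (-s * stdNormalPDF s) s := by
  rw [show stdNormalPDF = fun x => (√(2 * π))⁻¹ * exp (-(x ^ 2) / 2) from funext stdNormalPDF_eq]
  have hexp := (((hasDerivAt_pow 2 s).neg.div_const 2).exp).const_mul (√(2 * π))⁻¹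
  refine hexp.congr_deriv ?_
  simp only [Pi.neg_apply]
  ring

lemma continuous_stdNormalPDF : Continuous stdNormalPDF :=
  continuous_iff_continuousAt.2 fun s => (hasDerivAt_stdNormalPDF s).continuousAt

lemma stdNormalCDF_eq_integral (s : ℝ) : stdNormalCDF s = ∫ x in Iic s, stdNormalPDF x := by
  rw [stdNormalCDF, gaussianReal_apply_eq_integral 0 one_ne_zero, ENNReal.toReal_ofReal]
  · rfl
  · exact setIntegral_nonneg measurableSet_Iic fun x _ => (stdNormalPDF_pos x).le

lemma stdNormalCDF_sub (x y : ℝ) :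
    stdNormalCDF y - stdNormalCDF x = ∫ t in x..y, stdNormalPDF t := by
  have hint : Integrable stdNormalPDF := integrable_gaussianPDFReal 0 1
  rw [stdNormalCDF_eq_integral, stdNormalCDF_eq_integral]
  exact intervalIntegral.integral_Iic_sub_Iic hint.integrableOn hint.integrableOn

lemma hasDerivAt_stdNormalCDF (s : ℝ) : HasDerivAt stdNormalCDF (stdNormalPDF s) s := by
  have hΦ : stdNormalCDF = fun y => stdNormalCDF 0 + ∫ t in (0 : ℝ)..y, stdNormalPDF t := by
    funext y
    rw [← stdNormalCDF_sub]
    ring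
  rw [hΦ]
  exact (intervalIntegral.integral_hasDerivAt_right
    (continuous_stdNormalPDF.intervalIntegrable _ _)
    (continuous_stdNormalPDF.stronglyMeasurableAtFilter _ _)
    continuous_stdNormalPDF.continuousAt).const_add _

lemma stdNormalCDF_pos (s : ℝ) : 0 < stdNormalCDF s := by
  refine ENNReal.toReal_pos (fun h => ?_) (measure_ne_top _ _)
  simpa using gaussianReal_absolutelyContinuous' 0 one_ne_zero h

lemma stdNormalCDF_zero : stdNormalCDF 0 = 1 / 2 := by
  have : NullSingletonClass (gaussianReal 0 1) := nullSingletonClass_gaussianReal one_ne_zero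
  have hsymm : (gaussianReal 0 1).real (Ioi 0) = (gaussianReal 0 1).real (Iic 0) := by
    have hmap := gaussianReal_map_neg (μ := 0) (v := 1)
    rw [neg_zero] at hmap
    conv_rhs => rw [← hmap]
    rw [map_measureReal_apply measurable_neg measurableSet_Iic, neg_preimage, neg_Iic, neg_zero]
    exact measureReal_congr Ioi_ae_eq_Ici
  have hcompl :=
    probReal_compl_eq_one_sub (μ := gaussianReal 0 1) (measurableSet_Iic (a := (0 : ℝ)))
  rw [compl_Iic, hsymm] at hcompl
  change (gaussianReal 0 1).real (Iic 0) = 1 / 2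
  linarith

lemma stdNormalPDF_sq_add_mul_lt_stdNormalCDF_sq {s : ℝ} (hs : 0 ≤ s) :
    stdNormalPDF s ^ 2 + s * stdNormalPDF s * stdNormalCDF s < stdNormalCDF s ^ 2 := by
  set u : ℝ → ℝ := fun s =>
    stdNormalCDF s ^ 2 - stdNormalPDF s ^ 2 - s * stdNormalPDF s * stdNormalCDF s
  have hu : ∀ x, HasDerivAt u
      (stdNormalPDF x * ((1 + x ^ 2) * stdNormalCDF x + x * stdNormalPDF x)) x := fun x => by
    have hΦ := hasDerivAt_stdNormalCDF x
    have hφ := hasDerivAt_stdNormalPDF x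
    refine (((hΦ.pow 2).sub (hφ.pow 2)).sub (((hasDerivAt_id x).mul hφ).mul hΦ)).congr_deriv ?_
    simp only [Pi.mul_apply, id]
    ring
  have hu0 : 0 < u 0 := by
    have hsq : √(2 * π) ^ 2 = 2 * π := sq_sqrt (by positivity)
    have hπ : 4 < 2 * π := by linarith [pi_gt_three]
    simp only [u, stdNormalCDF_zero, stdNormalPDF_zero, inv_pow, hsq, zero_mul, sub_zero]
    have : (2 * π)⁻¹ < 4⁻¹ := inv_strictAnti₀ (by norm_num) hπ
    linarith
  have hmono : MonotoneOn u (Ici 0) := by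
    refine monotoneOn_of_deriv_nonneg (convex_Ici 0)
      (continuous_iff_continuousAt.2 fun x => (hu x).continuousAt).continuousOn
      (fun x _ => (hu x).differentiableAt.differentiableWithinAt) fun x hx => ?_
    rw [interior_Ici] at hx
    have := stdNormalPDF_pos x
    have := stdNormalCDF_pos x
    have hx : 0 < x := hx
    rw [(hu x).deriv]
    positivity
  linarith [hmono self_mem_Ici hs hs]

noncomputable def millsShift (s : ℝ) : ℝ := s + stdNormalPDF s / stdNormalCDF s

lemma hasDerivAt_millsShift (s : ℝ) :
    HasDerivAt millsShift ((stdNormalCDF s ^ 2 - stdNormalPDF s ^ 2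
      - s * stdNormalPDF s * stdNormalCDF s) / stdNormalCDF s ^ 2) s := by
  have hΦ := (stdNormalCDF_pos s).ne'
  refine ((hasDerivAt_id s).add ((hasDerivAt_stdNormalPDF s).div
    (hasDerivAt_stdNormalCDF s) hΦ)).congr_deriv ?_
  field_simp
  ring

lemma continuous_millsShift : Continuous millsShift :=
  continuous_iff_continuousAt.2 fun s => (hasDerivAt_millsShift s).continuousAt

lemma millsShift_strictMonoOn : StrictMonoOn millsShift (Ici 0) := by
  refine strictMonoOn_of_deriv_pos (convex_Ici 0) continuous_millsShift.continuousOn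
    fun x hx => ?_
  rw [interior_Ici] at hx
  rw [(hasDerivAt_millsShift x).deriv]
  have := stdNormalPDF_sq_add_mul_lt_stdNormalCDF_sq (le_of_lt hx)
  have := stdNormalCDF_pos x
  exact div_pos (by linarith) (by positivity)

lemma millsShift_zero : millsShift 0 = √(2 / π) := by
  have hsqrt : √(2 * π) = √2 * √π := sqrt_mul zero_le_two π
  rw [millsShift, stdNormalCDF_zero, stdNormalPDF_zero, sqrt_div' 2 pi_pos.le, hsqrt]
  have h2 : √2 * √2 = 2 := mul_self_sqrt zero_le_two
  field_simp
  linarith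

lemma exists_pos_millsShift_eq {a : ℝ} (ha : √(2 / π) < a) : ∃ s, 0 < s ∧ millsShift s = a := by
  have ha0 : 0 < a := (sqrt_nonneg _).trans_lt ha
  have hma : a < millsShift a :=
    lt_add_of_pos_right a (div_pos (stdNormalPDF_pos a) (stdNormalCDF_pos a))
  obtain ⟨s, hs, hms⟩ := intermediate_value_Ioo ha0.le continuous_millsShift.continuousOn
    ⟨millsShift_zero ▸ ha, hma⟩
  exact ⟨s, hs.1, hms⟩

noncomputable def objective (a s : ℝ) : ℝ := 2 * exp (-(a * s) + s ^ 2 / 2) * stdNormalCDF s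

lemma objective_pos (a s : ℝ) : 0 < objective a s := by
  have := stdNormalCDF_pos s
  unfold objective
  positivity

lemma hasDerivAt_objective (a s : ℝ) :
    HasDerivAt (objective a) (objective a s * (millsShift s - a)) s := by
  have hΦ := (stdNormalCDF_pos s).ne'
  have hlin : HasDerivAt (fun s => -(a * s) + s ^ 2 / 2) (-a + s) s := by
    refine (((hasDerivAt_id s).const_mul a).neg.add
      ((hasDerivAt_pow 2 s).div_const 2)).congr_deriv ?_
    ring
  refine (((hlin.exp).const_mul 2).mul (hasDerivAt_stdNormalCDF s)).congr_deriv ?_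
  simp only [objective, millsShift]
  field_simp
  ring

lemma objective_lt_of_ne {a s t : ℝ} (hs : 0 ≤ s) (hms : millsShift s = a) (ht : 0 ≤ t)
    (hts : t ≠ s) : objective a s < objective a t := by
  have hderiv : ∀ x, deriv (objective a) x = objective a x * (millsShift x - a) :=
    fun x => (hasDerivAt_objective a x).deriv
  have hcont : Continuous (objective a) :=
    continuous_iff_continuousAt.2 fun x => (hasDerivAt_objective a x).continuousAt
  subst hms
  rcases hts.lt_or_gt with hlt | hgt
  · refine strictAntiOn_of_deriv_neg (convex_Icc 0 s) hcont.continuousOn (fun x hx => ?_)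
      ⟨ht, hlt.le⟩ ⟨hs, le_rfl⟩ hlt
    rw [interior_Icc] at hx
    rw [hderiv]
    exact mul_neg_of_pos_of_neg (objective_pos _ x) (sub_neg.2 <|
      millsShift_strictMonoOn (le_of_lt hx.1) hs hx.2)
  · refine strictMonoOn_of_deriv_pos (convex_Ici s) hcont.continuousOn (fun x hx => ?_)
      self_mem_Ici hgt.le hgt
    rw [interior_Ici] at hx
    rw [hderiv]
    exact mul_pos (objective_pos _ x) (sub_pos.2 <|
      millsShift_strictMonoOn hs (hs.trans (le_of_lt hx)) hx)

theorem stmt_11_general (ε : ℝ) (hε0 : 0 < ε) (a : ℝ)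
    (ha : a = Real.sqrt (2 / Real.pi) * (1 + ε)) :
    ∃ sStar : ℝ, (0 < sStar ∧ sStar = a - stdNormalPDF sStar / stdNormalCDF sStar) ∧
      (∀ t : ℝ, 0 < t → t = a - stdNormalPDF t / stdNormalCDF t → t = sStar) ∧
      (∀ t : ℝ, 0 < t → t ≠ sStar →
        2 * Real.exp (-(a * sStar) + sStar ^ 2 / 2) * stdNormalCDF sStar
          < 2 * Real.exp (-(a * t) + t ^ 2 / 2) * stdNormalCDF t) := by
  have hlt : √(2 / π) < a := by
    rw [ha]
    exact lt_mul_right (sqrt_pos.2 (by positivity)) (lt_add_of_pos_right 1 hε0)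
  obtain ⟨s, hs, hms⟩ := exists_pos_millsShift_eq hlt
  refine ⟨s, ⟨hs, eq_sub_of_add_eq hms⟩, fun t ht hta => ?_,
    fun t ht hts => objective_lt_of_ne hs.le hms ht.le hts⟩
  exact millsShift_strictMonoOn.injOn ht.le hs.le ((add_eq_of_eq_sub hta).trans hms.symm)

/-- For `0 < ε < 1` and `a = √(2/π)(1+ε)`, the equation `s = a - φ(s)/Φ(s)` has a unique
solution `s*` in `(0, ∞)`, and `s*` is the unique minimizer on `(0, ∞)` of
`A(s) = 2 e^{-as+s²/2} Φ(s)`. -/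
theorem stmt_11 (ε : ℝ) (hε0 : 0 < ε) (hε1 : ε < 1) (a : ℝ)
    (ha : a = Real.sqrt (2 / Real.pi) * (1 + ε)) :
    ∃ sStar : ℝ, (0 < sStar ∧ sStar = a - stdNormalPDF sStar / stdNormalCDF sStar) ∧
      (∀ t : ℝ, 0 < t → t = a - stdNormalPDF t / stdNormalCDF t → t = sStar) ∧
      (∀ t : ℝ, 0 < t → t ≠ sStar →
        2 * Real.exp (-(a * sStar) + sStar ^ 2 / 2) * stdNormalCDF sStar
          < 2 * Real.exp (-(a * t) + t ^ 2 / 2) * stdNormalCDF t) :=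
  stmt_11_general ε hε0 a ha
end

section
/- Let q ∈ {1, 2, 3}, let p be a positive integer, let c₁, …, c_p be real numbers with ∑_{i=1}^p c_i² = 1, and let t be any real number. Then ∏_{i=1}^p ( 1 + (1/q)(cosh(c_i t √q) - 1) ) ≤ e^{t²/2}; that is, the moment generating function of y = ∑ c_i R_i, where the R_i are i.i.d. Achlioptas random variables with parameter q, is bounded by the moment generating function of a standard Gaussian. -/
/-!
Both sides are power series in `t²` with nonnegative coefficients. For `n ≥ 1` the coefficient of
`t^{2n}` in `1 + (cosh (t √q) - 1) / q` is `q^{n-1} / (2n)!`, and in `exp (t² / 2)` it is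
`1 / (2^n n!)`. Since `(2n)! = 2^n n! (2n-1)‼` and `(2n-1)‼ ≥ 3^{n-1} ≥ q^{n-1}`, the first series
is dominated termwise by the second. Applying this at each `cᵢ t` and multiplying gives the bound
`exp (∑ cᵢ² t² / 2) = exp (t² / 2)`.
-/

open Nat Real

theorem Nat.three_pow_le_doubleFactorial (n : ℕ) : 3 ^ n ≤ (2 * n + 1)‼ := by
  induction n with
  | zero => rfl
  | succ n ih =>
    rw [show 2 * (n + 1) + 1 = 2 * n + 1 + 2 by ring, doubleFactorial_add_two, pow_succ']
    exact Nat.mul_le_mul (by omega) ih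

theorem Nat.three_pow_mul_two_pow_mul_factorial_le (n : ℕ) :
    3 ^ n * (2 ^ (n + 1) * (n + 1)!) ≤ (2 * (n + 1))! := by
  rw [← doubleFactorial_two_mul, mul_comm, show 2 * (n + 1) = 2 * n + 1 + 1 by ring,
    factorial_eq_mul_doubleFactorial]
  exact Nat.mul_le_mul_left _ (three_pow_le_doubleFactorial n)

theorem Real.hasSum_exp_sub_one (x : ℝ) :
    HasSum (fun n : ℕ ↦ x ^ (n + 1) / (n + 1)!) (exp x - 1) := by
  have h : HasSum (fun n : ℕ ↦ x ^ n / n !) (exp x) := by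
    rw [Real.exp_eq_exp_ℝ]
    exact NormedSpace.expSeries_div_hasSum_exp x
  simpa using (hasSum_nat_add_iff' 1).mpr h

noncomputable def achlioptasMGF (q t : ℝ) : ℝ :=
  1 + (1 / q) * (cosh (t * √q) - 1)

theorem one_le_achlioptasMGF {q : ℝ} (hq : 0 ≤ q) (t : ℝ) : 1 ≤ achlioptasMGF q t := by
  have : 0 ≤ 1 / q * (cosh (t * √q) - 1) :=
    mul_nonneg (by positivity) (sub_nonneg.mpr (one_le_cosh _))
  unfold achlioptasMGF
  linarith

theorem hasSum_achlioptasMGF_sub_one {q : ℝ} (hq : 0 < q) (t : ℝ) :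
    HasSum (fun n : ℕ ↦ q ^ n * (t ^ 2) ^ (n + 1) / (2 * (n + 1))!) (achlioptasMGF q t - 1) := by
  have h := ((hasSum_nat_add_iff' 1).mpr (hasSum_cosh (t * √q))).mul_left (1 / q)
  have hterm : ∀ n : ℕ, q ^ n * (t ^ 2) ^ (n + 1) / (2 * (n + 1))!
      = 1 / q * ((t * √q) ^ (2 * (n + 1)) / (2 * (n + 1))!) := fun n ↦ by
    rw [pow_mul, mul_pow, sq_sqrt hq.le, mul_pow, pow_succ q]
    field_simp
  rw [funext hterm]
  simpa [achlioptasMGF] using h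

theorem achlioptasMGF_le_exp_sq_half {q : ℝ} (hq₀ : 0 < q) (hq₃ : q ≤ 3) (t : ℝ) :
    achlioptasMGF q t ≤ exp (t ^ 2 / 2) := by
  suffices achlioptasMGF q t - 1 ≤ exp (t ^ 2 / 2) - 1 by linarith
  refine hasSum_le (fun n ↦ ?_) (hasSum_achlioptasMGF_sub_one hq₀ t) (hasSum_exp_sub_one _)
  have hcoeff : q ^ n * (2 ^ (n + 1) * (n + 1)! : ℝ) ≤ (2 * (n + 1))! :=
    calc q ^ n * (2 ^ (n + 1) * (n + 1)! : ℝ)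
        ≤ 3 ^ n * (2 ^ (n + 1) * (n + 1)!) := by gcongr
      _ ≤ (2 * (n + 1))! := mod_cast three_pow_mul_two_pow_mul_factorial_le n
  rw [div_pow, div_div, div_le_div_iff₀ (by positivity) (by positivity)]
  calc q ^ n * (t ^ 2) ^ (n + 1) * (2 ^ (n + 1) * (n + 1)!)
      = (t ^ 2) ^ (n + 1) * (q ^ n * (2 ^ (n + 1) * (n + 1)!)) := by ring
    _ ≤ (t ^ 2) ^ (n + 1) * (2 * (n + 1))! := by gcongr

theorem stmt_17_general (q : ℕ) (hq : q = 1 ∨ q = 2 ∨ q = 3) (p : ℕ)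
    (c : Fin p → ℝ) (hc : ∑ i, (c i) ^ 2 = 1) (t : ℝ) :
    ∏ i, (1 + (1 / (q : ℝ)) * (Real.cosh (c i * t * Real.sqrt q) - 1))
      ≤ Real.exp (t ^ 2 / 2) := by
  have hq₀ : (0 : ℝ) < q := by rcases hq with rfl | rfl | rfl <;> norm_num
  have hq₃ : (q : ℝ) ≤ 3 := by rcases hq with rfl | rfl | rfl <;> norm_num
  calc ∏ i, achlioptasMGF q (c i * t)
      ≤ ∏ i, exp ((c i * t) ^ 2 / 2) :=
        Finset.prod_le_prod (fun i _ ↦ zero_le_one.trans (one_le_achlioptasMGF hq₀.le _))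
          (fun i _ ↦ achlioptasMGF_le_exp_sq_half hq₀ hq₃ _)
    _ = exp ((∑ i, c i ^ 2) * (t ^ 2 / 2)) := by
        rw [← Real.exp_sum, Finset.sum_mul]
        congr! 2 with i
        ring
    _ = exp (t ^ 2 / 2) := by rw [hc, one_mul]

/-- For `q ∈ {1,2,3}`, reals `c₁, …, c_p` with `∑ cᵢ² = 1` and any real `t`, the moment
generating function `∏ᵢ (1 + (1/q)(cosh(cᵢ t √q) - 1))` of `∑ cᵢ Rᵢ` (with `Rᵢ` i.i.d.
Achlioptas variables with parameter `q`) is bounded by `e^{t²/2}`. -/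
theorem stmt_17 (q : ℕ) (hq : q = 1 ∨ q = 2 ∨ q = 3) (p : ℕ) (hp : 0 < p)
    (c : Fin p → ℝ) (hc : ∑ i, (c i) ^ 2 = 1) (t : ℝ) :
    ∏ i, (1 + (1 / (q : ℝ)) * (Real.cosh (c i * t * Real.sqrt q) - 1))
      ≤ Real.exp (t ^ 2 / 2) :=
  stmt_17_general q hq p c hc t
end
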